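/- arXiv:2105.08869 — 3 statements merged into one kernel-verified Lean document; each statement's English description precedes it below -/
import Mathlib

section
/- Let A = {1,…,m} with m ≥ 2, let μ_i ∈ (0,1] and θ_i > 0 for each i ∈ A, and let F : (0,∞) → (0,∞) be an increasing function with ∑_{n=1}^∞ 1/F(n) < ∞. For each arm i, let {r_i(n)}_{n≥0} be independent exponential random variables (independent across both i and n) with E[r_i(n)] = 1/(μ_i F(n + θ_i)). Then, almost surely: the totals R_i := ∑_{n=0}^∞ r_i(n) are all finite and pairwise distinct, so there is a unique arm a = argmin_{i∈A} R_i; and for every b ≠ a, the set {n ∈ ℕ : ∑_{k=0}^n r_b(k) < R_a} is finite. In particular the 'attraction time' N := max_{b≠a} ∑_{k=0}^{K_b} r_b(k), where K_b is the largest n with ∑_{k=0}^n r_b(k) < R_a, is almost surely finite, and after time N only arm a generates rewards in the embedded process (monopoly). -/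
/-!
Each total `R i` has mean `∑ n, 1 / (μ i * F (n + θ i))`, which is finite because `F` is
increasing and `∑ 1 / F n < ∞`; hence `R i < ∞` almost surely. Ties have probability zero:
`R i = R j` forces `r i 0` to equal `R j - ∑ n, r i (n + 1)`, a function of the other variables,
hence independent of `r i 0`, whose law has no atoms. The arm `a` with the smallest total wins:
the partial sums of any other arm `b` converge to `R b > R a`, so only finitely many of them lie
below `R a`.
-/

open MeasureTheory ProbabilityTheory

def IsExponentialRV {Ω : Type*} [MeasurableSpace Ω] (P : Measure Ω) (X : Ω → ℝ) (l : ℝ) : Prop :=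
  Measure.map X P = expMeasure l

open Real Set Filter Topology

lemma summable_inv_comp_add_of_monotoneOn {F : ℝ → ℝ} (hFpos : ∀ x > (0 : ℝ), 0 < F x)
    (hFmono : MonotoneOn F (Ioi 0)) (hFsum : Summable fun n : ℕ => 1 / F (n + 1))
    {θ : ℝ} (hθ : 0 < θ) : Summable fun n : ℕ => (F (n + θ))⁻¹ := by
  refine (summable_nat_add_iff 1).1 (hFsum.of_nonneg_of_le (fun n => ?_) fun n => ?_)
  · exact inv_nonneg.2 (hFpos _ (by positivity)).le
  · have hn : (0 : ℝ) < n + 1 := by positivity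
    rw [one_div, Nat.cast_succ, add_right_comm]
    exact inv_anti₀ (hFpos _ hn) (hFmono hn (mem_Ioi.2 (by positivity)) (by linarith))

lemma finite_setOf_sum_range_succ_lt {f : ℕ → ℝ} {s c : ℝ} (hf : HasSum f s) (hc : c < s) :
    {n | ∑ k ∈ Finset.range (n + 1), f k < c}.Finite := by
  have hev : ∀ᶠ n in atTop, c < ∑ k ∈ Finset.range (n + 1), f k :=
    (hf.tendsto_sum_nat.comp (tendsto_add_atTop_nat 1)).eventually_const_lt hc
  rw [← Nat.cofinite_eq_atTop] at hev
  simpa using eventually_cofinite.1 (hev.mono fun n hn => not_lt.2 hn.le)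

namespace ProbabilityTheory

variable {l : ℝ}

instance nullSingletonClass_expMeasure : NullSingletonClass (expMeasure l) :=
  inferInstanceAs (NullSingletonClass (volume.withDensity _))

lemma expMeasure_Iio_zero (hl : 0 < l) : expMeasure l (Iio 0) = 0 := by
  have := isProbabilityMeasure_expMeasure hl
  refine measure_mono_null Iio_subset_Iic_self ?_
  simp [← ofReal_cdf, cdf_expMeasure_eq hl]

lemma expMeasure_Ioi (hl : 0 < l) {t : ℝ} (ht : 0 ≤ t) :
    expMeasure l (Ioi t) = ENNReal.ofReal (exp (-(l * t))) := by
  have := isProbabilityMeasure_expMeasure hl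
  have hexp : exp (-(l * t)) ≤ 1 := exp_le_one_iff.2 (by nlinarith)
  rw [← compl_Iic, prob_compl_eq_one_sub measurableSet_Iic, ← ofReal_cdf, cdf_expMeasure_eq hl,
    if_pos ht, ← ENNReal.ofReal_one, ← ENNReal.ofReal_sub _ (by linarith), sub_sub_cancel]

lemma lintegral_enorm_expMeasure (hl : 0 < l) :
    ∫⁻ x, ‖x‖ₑ ∂expMeasure l = ENNReal.ofReal l⁻¹ := by
  have hnonneg : 0 ≤ᵐ[expMeasure l] id :=
    measure_mono_null (fun x hx => by simpa using hx) (expMeasure_Iio_zero hl)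
  have htail : IntegrableOn (fun t => exp (-l * t)) (Ioi 0) := exp_neg_integrableOn_Ioi 0 hl
  calc ∫⁻ x, ‖x‖ₑ ∂expMeasure l = ∫⁻ x, ENNReal.ofReal x ∂expMeasure l :=
        lintegral_congr_ae (hnonneg.mono fun x hx => enorm_eq_ofReal hx)
    _ = ∫⁻ t in Ioi 0, ENNReal.ofReal (exp (-l * t)) := by
        rw [lintegral_eq_lintegral_meas_lt (f := fun x => x) _ hnonneg aemeasurable_id]
        refine setLIntegral_congr_fun measurableSet_Ioi fun t ht => ?_
        rw [neg_mul, ← expMeasure_Ioi hl (le_of_lt ht)]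
        rfl
    _ = ENNReal.ofReal l⁻¹ := by
        rw [← ofReal_integral_eq_lintegral_ofReal htail (ae_of_all _ fun t => (exp_pos _).le),
          integral_exp_mul_Ioi (by linarith) 0, mul_zero, exp_zero, neg_div_neg_eq, one_div]

theorem ae_summable_of_tsum_lintegral_enorm_ne_top {Ω ι E : Type*} [MeasurableSpace Ω]
    {P : Measure Ω} [Countable ι] [NormedAddCommGroup E] [CompleteSpace E] {X : ι → Ω → E}
    (hX : ∀ i, AEStronglyMeasurable (X i) P) (h : ∑' i, ∫⁻ ω, ‖X i ω‖ₑ ∂P ≠ ⊤) :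
    ∀ᵐ ω ∂P, Summable fun i => X i ω := by
  rw [← lintegral_tsum fun i => (hX i).enorm] at h
  filter_upwards [ae_lt_top' (AEMeasurable.tsum fun i => (hX i).enorm) h] with ω hω
  exact Summable.of_nnnorm (ENNReal.tsum_coe_ne_top_iff_summable.1 hω.ne)

theorem iIndepFun.indepFun_of_measurable_biSup_ne {Ω ι β γ : Type*} {mΩ : MeasurableSpace Ω}
    {P : Measure Ω} [mβ : MeasurableSpace β] [MeasurableSpace γ] {f : ι → Ω → β}
    (hf : ∀ i, Measurable (f i)) (h : iIndepFun f P) (k : ι) {Z : Ω → γ}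
    (hZ : Measurable[⨆ i ∈ ({k}ᶜ : Set ι), mβ.comap (f i)] Z) : IndepFun (f k) Z P := by
  have := indep_iSup_of_disjoint (fun i => (hf i).comap_le) h (disjoint_compl_right (a := {k}))
  refine indep_of_indep_of_le_right (indep_of_indep_of_le_left this ?_) hZ.comap_le
  exact le_biSup (fun i => mβ.comap (f i)) (mem_singleton k)

theorem IndepFun.ae_ne {Ω : Type*} {mΩ : MeasurableSpace Ω} {P : Measure Ω}
    [IsFiniteMeasure P] {X Z : Ω → ℝ} (hX : Measurable X) (hZ : Measurable Z)
    (h : IndepFun X Z P) [NullSingletonClass (P.map X)] : ∀ᵐ ω ∂P, X ω ≠ Z ω := by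
  have hdiag : MeasurableSet {p : ℝ × ℝ | p.1 = p.2} := measurableSet_diagonal
  rw [ae_iff]
  simp only [ne_eq, not_not]
  rw [show {ω | X ω = Z ω} = (fun ω => (X ω, Z ω)) ⁻¹' {p | p.1 = p.2} from rfl,
    ← Measure.map_apply (hX.prodMk hZ) hdiag,
    (indepFun_iff_map_prod_eq_prod_map_map hX.aemeasurable hZ.aemeasurable).1 h,
    Measure.prod_apply_symm hdiag]
  simp

theorem ae_tsum_ne_of_iIndepFun {Ω ι : Type*} {mΩ : MeasurableSpace Ω} {P : Measure Ω}
    [IsFiniteMeasure P] {r : ι → ℕ → Ω → ℝ} (hr : ∀ i n, Measurable (r i n))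
    (hindep : iIndepFun (fun p : ι × ℕ => r p.1 p.2) P) {i j : ι} (hij : i ≠ j)
    [NullSingletonClass (P.map (r i 0))] :
    ∀ᵐ ω ∂P, Summable (fun n => r i n ω) → ∑' n, r i n ω ≠ ∑' n, r j n ω := by
  let Z := fun ω => ∑' n, r j n ω - ∑' n, r i (n + 1) ω
  -- quantified over `m`: needed both for `mΩ` and for the σ-algebra of all variables but `r i 0`
  have hZ : ∀ m : MeasurableSpace Ω, (∀ p ≠ (i, 0), Measurable[m] (r p.1 p.2)) → Measurable[m] Z :=
    fun m hm => (Measurable.tsum fun n => hm (j, n) (by simp [hij.symm])).sub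
      (Measurable.tsum fun n => hm (i, n + 1) (by simp))
  have hindepZ : IndepFun (r i 0) Z P :=
    hindep.indepFun_of_measurable_biSup_ne (f := fun p : ι × ℕ => r p.1 p.2)
      (fun p => hr p.1 p.2) (i, 0) (hZ _ fun p hp => Measurable.of_comap_le (le_biSup
        (fun q : ι × ℕ => MeasurableSpace.comap (r q.1 q.2) inferInstance) hp))
  filter_upwards [hindepZ.ae_ne (hr i 0) (hZ _ fun p _ => hr p.1 p.2)] with ω hω hsum heq
  refine hω ?_
  simp only [Z, ← heq, hsum.tsum_eq_zero_add]
  ring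

end ProbabilityTheory

namespace IsExponentialRV

variable {Ω : Type*} [MeasurableSpace Ω] {P : Measure Ω} {X : Ω → ℝ} {l : ℝ}

lemma nullSingletonClass_map (h : IsExponentialRV P X l) : NullSingletonClass (P.map X) :=
  (show P.map X = expMeasure l from h) ▸ inferInstance

lemma lintegral_enorm (h : IsExponentialRV P X l) (hX : Measurable X) (hl : 0 < l) :
    ∫⁻ ω, ‖X ω‖ₑ ∂P = ENNReal.ofReal l⁻¹ := by
  rw [← lintegral_map measurable_enorm hX, show P.map X = expMeasure l from h,
    lintegral_enorm_expMeasure hl]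

end IsExponentialRV

/-- **Monopoly via exponential embedding.** With arms `i ∈ Fin m` (`m ≥ 2`),
Bernoulli means `μ i ∈ (0,1]`, biases `θ i > 0`, and an increasing feedback function
`F : (0,∞) → (0,∞)` with `∑ 1/F(n) < ∞`, let `r i n` be independent exponential random
variables with mean `1/(μ i * F (n + θ i))`.  Then almost surely: every total
`R i = ∑' n, r i n` is finite, the totals are pairwise distinct (so there is a unique
arm `a` minimizing `R`), and for every `b ≠ a` the set of `n` with
`∑_{k=0}^n r b k < R a` is finite, i.e. after a finite attraction time only arm `a`
generates rewards (monopoly). -/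
theorem monopoly_of_exponential_embedding {Ω : Type*} [MeasurableSpace Ω] (P : Measure Ω)
    [IsProbabilityMeasure P] (m : ℕ) (hm : 2 ≤ m)
    (μ : Fin m → ℝ) (hμ : ∀ i, μ i ∈ Set.Ioc (0 : ℝ) 1)
    (θ : Fin m → ℝ) (hθ : ∀ i, 0 < θ i)
    (F : ℝ → ℝ) (hFpos : ∀ x > (0 : ℝ), 0 < F x)
    (hFmono : StrictMonoOn F (Set.Ioi (0 : ℝ)))
    (hFsum : Summable fun n : ℕ => 1 / F (n + 1))
    (r : Fin m → ℕ → Ω → ℝ)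
    (hmeas : ∀ i n, Measurable (r i n))
    (hindep : iIndepFun
      (fun p : Fin m × ℕ => r p.1 p.2) P)
    (hexp : ∀ i n, IsExponentialRV P (r i n) (μ i * F (n + θ i))) :
    ∀ᵐ ω ∂P,
      (∀ i, Summable fun n => r i n ω) ∧
      (∀ i j, i ≠ j → (∑' n, r i n ω) ≠ ∑' n, r j n ω) ∧
      ∃ a : Fin m, (∀ b, b ≠ a → (∑' n, r a n ω) < ∑' n, r b n ω) ∧
        ∀ b, b ≠ a →
          {n : ℕ | (∑ k ∈ Finset.range (n + 1), r b k ω) < ∑' n', r a n' ω}.Finite := by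
  have hrate : ∀ i (n : ℕ), 0 < μ i * F (n + θ i) := fun i n =>
    mul_pos (hμ i).1 (hFpos _ (by linarith [hθ i, (n.cast_nonneg : (0 : ℝ) ≤ n)]))
  have hsum : ∀ᵐ ω ∂P, ∀ i, Summable fun n => r i n ω := by
    refine ae_all_iff.2 fun i => ae_summable_of_tsum_lintegral_enorm_ne_top
      (fun n => (hmeas i n).aestronglyMeasurable) ?_
    have hmean : Summable fun n : ℕ => (μ i * F (n + θ i))⁻¹ := by
      simpa only [mul_inv] using (summable_inv_comp_add_of_monotoneOn hFpos hFmono.monotoneOn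
        hFsum (hθ i)).mul_left (μ i)⁻¹
    simp only [fun n => (hexp i n).lintegral_enorm (hmeas i n) (hrate i n),
      ← ENNReal.ofReal_tsum_of_nonneg (fun n => (inv_pos.2 (hrate i n)).le) hmean]
    exact ENNReal.ofReal_ne_top
  have _ : ∀ i, NullSingletonClass (P.map (r i 0)) := fun i => (hexp i 0).nullSingletonClass_map
  have hne : ∀ᵐ ω ∂P, ∀ i j, i ≠ j →
      Summable (fun n => r i n ω) → ∑' n, r i n ω ≠ ∑' n, r j n ω :=
    ae_all_iff.2 fun i => ae_all_iff.2 fun j => eventually_imp_distrib_left.2 fun hij =>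
      ae_tsum_ne_of_iIndepFun hmeas hindep hij
  filter_upwards [hsum, hne] with ω hsum hne
  have hdistinct : ∀ i j, i ≠ j → ∑' n, r i n ω ≠ ∑' n, r j n ω := fun i j hij =>
    hne i j hij (hsum i)
  obtain ⟨a, -, ha⟩ := Finset.exists_min_image Finset.univ (fun i => ∑' n, r i n ω)
    ⟨⟨0, by omega⟩, Finset.mem_univ _⟩
  have hmin : ∀ b, b ≠ a → ∑' n, r a n ω < ∑' n, r b n ω := fun b hb =>
    (ha b (Finset.mem_univ b)).lt_of_ne (hdistinct a b hb.symm)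
  exact ⟨hsum, hdistinct, a, hmin, fun b hb =>
    finite_setOf_sum_range_succ_lt (hsum b).hasSum (hmin b hb)⟩
end

section
/- Let (r_j)_{j≥n} be independent exponential random variables where r_j has rate h(j) > 0, with h nondecreasing in j and ∑_{j≥n} 1/h(j) < ∞; set R = ∑_{j≥n} r_j and Z = ∑_{j≥n} 1/h(j)², and assume 1/√Z ≤ h(n)/2. Then for every t > 0, P(R − E[R] > t√Z) ≤ e^{2−t} and P(R − E[R] < −t√Z) ≤ e^{2−t}. -/
/-!
For an exponential variable of rate `l` and `u ≤ l / 2`, `E[e^{uX}] = (1 - u/l)⁻¹` is at most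
`exp (u/l + 2 (u/l)²)`. By independence these bounds multiply along the partial sums of the tail,
and Fatou's lemma carries the product to `R`, whose partial sums converge almost surely since
`∑ E[r_j] < ∞`: `E[e^{uR}] ≤ exp (u E[R] + 2u²Z)` whenever `u ≤ h n / 2`. For `u = ±1/√Z` the
error term is `2`, and Markov's inequality for `e^{uR}` gives both tails.
-/

open MeasureTheory ProbabilityTheory

open Real Set Filter Topology
open scoped ENNReal

lemma inv_one_sub_le_exp {x : ℝ} (hx : x ≤ 1 / 2) : (1 - x)⁻¹ ≤ exp (x + 2 * x ^ 2) := by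
  have hpos : 0 < 1 - x := by linarith
  calc (1 - x)⁻¹ ≤ 1 + (x + 2 * x ^ 2) := by
        rw [inv_le_iff_one_le_mul₀ hpos]
        -- `(1 - x) (1 + x + 2x²) = 1 + x² (1 - 2x)`
        nlinarith [sq_nonneg x]
    _ ≤ exp (x + 2 * x ^ 2) := by linarith [add_one_le_exp (x + 2 * x ^ 2)]

lemma lintegral_expMeasure (l : ℝ) {f : ℝ → ℝ≥0∞} (hf : Measurable f) :
    ∫⁻ x, f x ∂expMeasure l = ∫⁻ x in Ioi 0, ENNReal.ofReal (l * exp (-(l * x))) * f x := by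
  rw [show expMeasure l = volume.withDensity (exponentialPDF l) from rfl,
    lintegral_withDensity_eq_lintegral_mul _ (f := exponentialPDF l)
      (measurable_exponentialPDFReal l).ennreal_ofReal hf,
    setLIntegral_congr Ioi_ae_eq_Ici, ← lintegral_indicator measurableSet_Ici]
  congr 1 with x
  rw [Pi.mul_apply, exponentialPDF_eq]
  by_cases hx : 0 ≤ x <;> simp [hx]

lemma lintegral_rpow_mul_exp_mul_expMeasure {a l u : ℝ} (ha : 0 < a) (hl : 0 ≤ l)
    (hu : u < l) :
    ∫⁻ x, ENNReal.ofReal (x ^ (a - 1) * exp (u * x)) ∂expMeasure l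
      = ENNReal.ofReal (l * ((1 / (l - u)) ^ a * Gamma a)) := by
  have hlu : 0 < l - u := by linarith
  have hint : IntegrableOn (fun x ↦ l * (x ^ (a - 1) * exp (-((l - u) * x)))) (Ioi 0) := by
    refine IntegrableOn.congr_fun (Integrable.const_mul (integrableOn_rpow_mul_exp_neg_mul_rpow
      (s := a - 1) (by linarith) one_pos hlu) l) (fun x _ ↦ ?_) measurableSet_Ioi
    simp only [rpow_one, neg_mul]
  have hnonneg :
      0 ≤ᵐ[volume.restrict (Ioi 0)] fun x ↦ l * (x ^ (a - 1) * exp (-((l - u) * x))) := by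
    filter_upwards [ae_restrict_mem measurableSet_Ioi] with x (hx : 0 < x)
    positivity
  calc ∫⁻ x, ENNReal.ofReal (x ^ (a - 1) * exp (u * x)) ∂expMeasure l
      = ∫⁻ x in Ioi 0, ENNReal.ofReal (l * (x ^ (a - 1) * exp (-((l - u) * x)))) := by
        rw [lintegral_expMeasure l (by fun_prop)]
        refine setLIntegral_congr_fun measurableSet_Ioi fun x (hx : 0 < x) ↦ ?_
        rw [← ENNReal.ofReal_mul (by positivity), show -((l - u) * x) = -(l * x) + u * x by ring,
          exp_add]
        ring_nf
    _ = ENNReal.ofReal (l * ((1 / (l - u)) ^ a * Gamma a)) := by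
        rw [← ofReal_integral_eq_lintegral_ofReal hint hnonneg, integral_const_mul,
          integral_rpow_mul_exp_neg_mul_Ioi ha hlu]

lemma lintegral_exp_mul_expMeasure {l u : ℝ} (hl : 0 ≤ l) (hu : u < l) :
    ∫⁻ x, ENNReal.ofReal (exp (u * x)) ∂expMeasure l = ENNReal.ofReal (l / (l - u)) := by
  simpa [div_eq_mul_inv] using lintegral_rpow_mul_exp_mul_expMeasure one_pos hl hu

lemma lintegral_ofReal_expMeasure {l : ℝ} (hl : 0 < l) :
    ∫⁻ x, ENNReal.ofReal x ∂expMeasure l = ENNReal.ofReal (1 / l) := by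
  have h := lintegral_rpow_mul_exp_mul_expMeasure (u := 0) two_pos hl.le hl
  norm_num [Gamma_two] at h
  rw [h]
  congr 1
  field_simp

lemma ae_nonneg_expMeasure (l : ℝ) : ∀ᵐ x ∂expMeasure l, 0 ≤ x := by
  simp only [ae_iff, not_le]
  exact (withDensity_apply _ measurableSet_Iio).trans (lintegral_exponentialPDF_of_nonpos le_rfl)

namespace IsExponentialRV

variable {Ω : Type*} [MeasurableSpace Ω] {P : Measure Ω} {X : Ω → ℝ} {l : ℝ}
  (hX : IsExponentialRV P X l) (hXm : Measurable X)
include hX hXm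

lemma lintegral_comp {f : ℝ → ℝ≥0∞} (hf : Measurable f) :
    ∫⁻ ω, f (X ω) ∂P = ∫⁻ x, f x ∂expMeasure l := by
  rw [← hX, lintegral_map hf hXm]

lemma ae_nonneg : ∀ᵐ ω ∂P, 0 ≤ X ω :=
  ae_of_ae_map hXm.aemeasurable (hX ▸ ae_nonneg_expMeasure l)

lemma integrable (hl : 0 < l) : Integrable X P := by
  refine ⟨hXm.aestronglyMeasurable, (hasFiniteIntegral_iff_ofReal (hX.ae_nonneg hXm)).2 ?_⟩
  rw [hX.lintegral_comp hXm ENNReal.measurable_ofReal, lintegral_ofReal_expMeasure hl]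
  exact ENNReal.ofReal_lt_top

lemma integral_eq (hl : 0 < l) : ∫ ω, X ω ∂P = 1 / l := by
  rw [integral_eq_lintegral_of_nonneg_ae (hX.ae_nonneg hXm) hXm.aestronglyMeasurable,
    hX.lintegral_comp hXm ENNReal.measurable_ofReal, lintegral_ofReal_expMeasure hl,
    ENNReal.toReal_ofReal (by positivity)]

lemma integrable_exp_mul {u : ℝ} (hl : 0 ≤ l) (hu : u < l) :
    Integrable (fun ω ↦ exp (u * X ω)) P := by
  refine ⟨by fun_prop, (hasFiniteIntegral_iff_ofReal (ae_of_all _ fun _ ↦ (exp_pos _).le)).2 ?_⟩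
  rw [hX.lintegral_comp hXm (f := fun x ↦ ENNReal.ofReal (exp (u * x))) (by fun_prop),
    lintegral_exp_mul_expMeasure hl hu]
  exact ENNReal.ofReal_lt_top

lemma mgf_eq {u : ℝ} (hl : 0 ≤ l) (hu : u < l) : mgf X P u = l / (l - u) := by
  rw [mgf, integral_eq_lintegral_of_nonneg_ae (ae_of_all _ fun _ ↦ (exp_pos _).le) (by fun_prop),
    hX.lintegral_comp hXm (f := fun x ↦ ENNReal.ofReal (exp (u * x))) (by fun_prop),
    lintegral_exp_mul_expMeasure hl hu, ENNReal.toReal_ofReal]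
  exact div_nonneg hl (by linarith)

lemma mgf_le {u : ℝ} (hl : 0 < l) (hu : u ≤ l / 2) :
    mgf X P u ≤ exp (u * (1 / l) + 2 * u ^ 2 * (1 / l ^ 2)) := by
  have hul : u / l ≤ 1 / 2 := by rw [div_le_iff₀ hl]; linarith
  calc mgf X P u = (1 - u / l)⁻¹ := by
        rw [hX.mgf_eq hXm hl.le (by linarith)]
        field_simp
    _ ≤ exp (u / l + 2 * (u / l) ^ 2) := inv_one_sub_le_exp hul
    _ = exp (u * (1 / l) + 2 * u ^ 2 * (1 / l ^ 2)) := by ring_nf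

end IsExponentialRV

lemma ae_summable_of_summable_integral_norm {α ι E : Type*} [MeasurableSpace α] {μ : Measure α}
    [Countable ι] [NormedAddCommGroup E] [CompleteSpace E] {F : ι → α → E}
    (hF : ∀ i, Integrable (F i) μ) (hs : Summable fun i ↦ ∫ a, ‖F i a‖ ∂μ) :
    ∀ᵐ a ∂μ, Summable fun i ↦ F i a := by
  have hfin : ∑' i, eLpNorm (F i) 1 μ ≠ ∞ := by
    simp_rw [eLpNorm_one_eq_lintegral_enorm, ← ofReal_integral_norm_eq_lintegral_enorm (hF _)]
    rw [← ENNReal.ofReal_tsum_of_nonneg (fun i ↦ integral_nonneg fun _ ↦ norm_nonneg _) hs]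
    exact ENNReal.ofReal_ne_top
  filter_upwards [summable_norm_of_tsum_eLpNorm_ne_top le_rfl
    (fun i ↦ (hF i).aestronglyMeasurable) hfin] with a ha using ha.of_norm

lemma lintegral_le_of_tendsto_ae {α : Type*} [MeasurableSpace α] {μ : Measure α}
    {f : ℕ → α → ℝ≥0∞} {g : α → ℝ≥0∞} {b : ℕ → ℝ≥0∞} {c : ℝ≥0∞}
    (hf : ∀ m, AEMeasurable (f m) μ) (hfg : ∀ᵐ a ∂μ, Tendsto (f · a) atTop (𝓝 (g a)))
    (hb : ∀ m, ∫⁻ a, f m a ∂μ ≤ b m) (hbc : Tendsto b atTop (𝓝 c)) : ∫⁻ a, g a ∂μ ≤ c :=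
  calc ∫⁻ a, g a ∂μ = ∫⁻ a, liminf (f · a) atTop ∂μ :=
        lintegral_congr_ae (hfg.mono fun _ ha ↦ ha.liminf_eq.symm)
    _ ≤ liminf (fun m ↦ ∫⁻ a, f m a ∂μ) atTop := lintegral_liminf_le' hf
    _ ≤ liminf b atTop := liminf_le_liminf (Eventually.of_forall hb)
    _ = c := hbc.liminf_eq

lemma measure_ge_le_exp_sub_of_lintegral_exp_le {Ω : Type*} [MeasurableSpace Ω] {P : Measure Ω}
    {Y : Ω → ℝ} (hY : AEMeasurable Y P) {b c : ℝ}
    (h : ∫⁻ ω, ENNReal.ofReal (exp (Y ω)) ∂P ≤ ENNReal.ofReal (exp c)) :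
    P {ω | b ≤ Y ω} ≤ ENNReal.ofReal (exp (c - b)) :=
  calc P {ω | b ≤ Y ω} ≤ P {ω | ENNReal.ofReal (exp b) ≤ ENNReal.ofReal (exp (Y ω))} :=
        measure_mono fun _ hω ↦ ENNReal.ofReal_le_ofReal (exp_le_exp.2 hω)
    _ ≤ (∫⁻ ω, ENNReal.ofReal (exp (Y ω)) ∂P) / ENNReal.ofReal (exp b) :=
        meas_ge_le_lintegral_div (by fun_prop) (by positivity) ENNReal.ofReal_ne_top
    _ ≤ ENNReal.ofReal (exp c) / ENNReal.ofReal (exp b) := by gcongr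
    _ = ENNReal.ofReal (exp (c - b)) := by
        rw [← ENNReal.ofReal_div_of_pos (exp_pos _), ← exp_sub]

lemma summable_one_div_sq_of_le {l : ℕ → ℝ} {c : ℝ} (hc : 0 < c) (hcl : ∀ j, c ≤ l j)
    (hsum : Summable fun j ↦ 1 / l j) : Summable fun j ↦ 1 / l j ^ 2 :=
  (hsum.mul_left (1 / c)).of_nonneg_of_le (fun j ↦ by have := hc.trans_le (hcl j); positivity)
    fun j ↦ by
      rw [sq, ← one_div_mul_one_div]
      exact mul_le_mul_of_nonneg_right (one_div_le_one_div_of_le hc (hcl j))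
        (one_div_pos.2 (hc.trans_le (hcl j))).le

section TailSum

variable {Ω : Type*} [MeasurableSpace Ω] {P : Measure Ω} {X : ℕ → Ω → ℝ} {l : ℕ → ℝ}
  (hl : ∀ j, 0 < l j) (hXm : ∀ j, Measurable (X j)) (hX : ∀ j, IsExponentialRV P (X j) (l j))
include hl hXm hX

lemma summable_integral_norm_of_isExponentialRV (hsum : Summable fun j ↦ 1 / l j) :
    Summable fun j ↦ ∫ ω, ‖X j ω‖ ∂P := by
  refine hsum.congr fun j ↦ ?_
  rw [← (hX j).integral_eq (hXm j) (hl j)]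
  exact integral_congr_ae (((hX j).ae_nonneg (hXm j)).mono fun _ hω ↦ (norm_of_nonneg hω).symm)

lemma hasSum_integral_tsum_of_isExponentialRV (hsum : Summable fun j ↦ 1 / l j) :
    HasSum (fun j ↦ 1 / l j) (∫ ω, ∑' j, X j ω ∂P) := by
  have h := hasSum_integral_of_summable_integral_norm (fun j ↦ (hX j).integrable (hXm j) (hl j))
    (summable_integral_norm_of_isExponentialRV hl hXm hX hsum)
  simpa only [(hX _).integral_eq (hXm _) (hl _)] using h

lemma lintegral_exp_mul_sum_range_le (hind : iIndepFun X P) {u : ℝ} (hu : ∀ j, u ≤ l j / 2)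
    (m : ℕ) :
    ∫⁻ ω, ENNReal.ofReal (exp (u * ∑ j ∈ Finset.range m, X j ω)) ∂P
      ≤ ENNReal.ofReal
          (exp (∑ j ∈ Finset.range m, (u * (1 / l j) + 2 * u ^ 2 * (1 / l j ^ 2)))) := by
  have := hind.isProbabilityMeasure
  have hint : Integrable (fun ω ↦ exp (u * (∑ j ∈ Finset.range m, X j) ω)) P :=
    hind.integrable_exp_mul_sum hXm fun j _ ↦
      (hX j).integrable_exp_mul (hXm j) (hl j).le (by linarith [hu j, hl j])
  simp only [Finset.sum_apply] at hint
  rw [← ofReal_integral_eq_lintegral_ofReal hint (ae_of_all _ fun _ ↦ (exp_pos _).le)]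
  refine ENNReal.ofReal_le_ofReal ?_
  calc ∫ ω, exp (u * ∑ j ∈ Finset.range m, X j ω) ∂P
      = ∏ j ∈ Finset.range m, mgf (X j) P u := by
        rw [← hind.mgf_sum hXm, mgf]
        simp only [Finset.sum_apply]
    _ ≤ ∏ j ∈ Finset.range m, exp (u * (1 / l j) + 2 * u ^ 2 * (1 / l j ^ 2)) :=
        Finset.prod_le_prod (fun _ _ ↦ mgf_nonneg) fun j _ ↦ (hX j).mgf_le (hXm j) (hl j) (hu j)
    _ = _ := (exp_sum _ _).symm

lemma lintegral_exp_mul_tsum_le (hind : iIndepFun X P) (hsum : Summable fun j ↦ 1 / l j)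
    (hsum₂ : Summable fun j ↦ 1 / l j ^ 2) {u : ℝ} (hu : ∀ j, u ≤ l j / 2) :
    ∫⁻ ω, ENNReal.ofReal (exp (u * ∑' j, X j ω)) ∂P
      ≤ ENNReal.ofReal (exp (u * ∑' j, 1 / l j + 2 * u ^ 2 * ∑' j, 1 / l j ^ 2)) := by
  have hexponent := (hsum.hasSum.mul_left u).add (hsum₂.hasSum.mul_left (2 * u ^ 2))
  have hconv : ∀ᵐ ω ∂P, Summable fun j ↦ X j ω :=
    ae_summable_of_summable_integral_norm (fun j ↦ (hX j).integrable (hXm j) (hl j))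
      (summable_integral_norm_of_isExponentialRV hl hXm hX hsum)
  refine lintegral_le_of_tendsto_ae (fun m ↦ by fun_prop) ?_
    (lintegral_exp_mul_sum_range_le hl hXm hX hind hu)
    (ENNReal.tendsto_ofReal ((continuous_exp.tendsto _).comp hexponent.tendsto_sum_nat))
  filter_upwards [hconv] with ω hω
  exact ENNReal.tendsto_ofReal ((continuous_exp.tendsto _).comp
    (hω.hasSum.tendsto_sum_nat.const_mul u))

lemma measure_mul_tsum_ge_le (hind : iIndepFun X P) (hsum : Summable fun j ↦ 1 / l j)
    (hsum₂ : Summable fun j ↦ 1 / l j ^ 2) {u : ℝ} (hu : ∀ j, u ≤ l j / 2) (b : ℝ) :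
    P {ω | u * ∫ ω', ∑' j, X j ω' ∂P + b ≤ u * ∑' j, X j ω}
      ≤ ENNReal.ofReal (exp (2 * u ^ 2 * ∑' j, 1 / l j ^ 2 - b)) := by
  refine (measure_ge_le_exp_sub_of_lintegral_exp_le
    ((Measurable.tsum hXm).aemeasurable.const_mul u)
    (lintegral_exp_mul_tsum_le hl hXm hX hind hsum hsum₂ hu)).trans_eq ?_
  rw [(hasSum_integral_tsum_of_isExponentialRV hl hXm hX hsum).tsum_eq]
  ring_nf

end TailSum

theorem exponential_tail_sum_concentration_general {Ω : Type*} [MeasurableSpace Ω] (P : Measure Ω)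
    (n : ℕ) (h : ℕ → ℝ) (hh : ∀ j, n ≤ j → 0 < h j)
    (hmono : ∀ j k, n ≤ j → j ≤ k → h j ≤ h k)
    (hsum : Summable fun j : ℕ => 1 / h (n + j))
    (r : ℕ → Ω → ℝ) (hmeas : ∀ j, Measurable (r j))
    (hindep : iIndepFun
      (fun j : {j : ℕ // n ≤ j} => r j) P)
    (hexp : ∀ j, n ≤ j → IsExponentialRV P (r j) (h j))
    (R : Ω → ℝ) (hR : ∀ ω, R ω = ∑' j : ℕ, r (n + j) ω)
    (Z : ℝ) (hZ : Z = ∑' j : ℕ, 1 / h (n + j) ^ 2)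
    (hZh : 1 / Real.sqrt Z ≤ h n / 2) :
    ∀ t : ℝ, 0 < t →
      P {ω | (∫ ω', R ω' ∂P) + t * Real.sqrt Z < R ω} ≤ ENNReal.ofReal (Real.exp (2 - t)) ∧
      P {ω | R ω < (∫ ω', R ω' ∂P) - t * Real.sqrt Z} ≤ ENNReal.ofReal (Real.exp (2 - t)) := by
  intro t _
  set X : ℕ → Ω → ℝ := fun j ↦ r (n + j)
  set l : ℕ → ℝ := fun j ↦ h (n + j)
  have hXm (j : ℕ) : Measurable (X j) := hmeas _
  have hl (j : ℕ) : 0 < l j := hh _ (Nat.le_add_right n j)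
  have hnl (j : ℕ) : h n ≤ l j := hmono n _ le_rfl (Nat.le_add_right n j)
  have hX (j : ℕ) : IsExponentialRV P (X j) (l j) := hexp _ (Nat.le_add_right n j)
  have hind : iIndepFun X P := hindep.precomp (g := fun j ↦ ⟨n + j, Nat.le_add_right n j⟩)
    fun a b hab ↦ by simpa using congrArg Subtype.val hab
  have hsum₂ : Summable fun j ↦ 1 / l j ^ 2 := summable_one_div_sq_of_le (hh n le_rfl) hnl hsum
  have hZl : Z = ∑' j, 1 / l j ^ 2 := hZ
  have hZpos : 0 < Z := hZl ▸ hsum₂.tsum_pos (fun j ↦ by positivity) 0 (by simp [hl 0])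
  obtain rfl : R = fun ω ↦ ∑' j, X j ω := funext hR
  have htail (u : ℝ) (hu : u ^ 2 * Z = 1) (hun : u ≤ h n / 2) :
      P {ω | u * ∫ ω', ∑' j, X j ω' ∂P + t ≤ u * ∑' j, X j ω} ≤ ENNReal.ofReal (exp (2 - t)) := by
    convert measure_mul_tsum_ge_le hl hXm hX hind hsum hsum₂
      (fun j ↦ hun.trans (by linarith [hnl j])) t using 4
    rw [← hZl]
    linear_combination (-2) * hu
  set s := 1 / √Z
  have hsZ : s * √Z = 1 := one_div_mul_cancel (sqrt_pos.2 hZpos).ne'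
  have hs₂ : s ^ 2 * Z = 1 := by rw [← sq_sqrt hZpos.le, ← mul_pow, hsZ, one_pow]
  have hs : 0 ≤ s := by positivity
  refine ⟨(measure_mono (ofPred_subset_ofPred.2 fun ω hω ↦ ?_)).trans (htail s hs₂ hZh),
    (measure_mono (ofPred_subset_ofPred.2 fun ω hω ↦ ?_)).trans
      (htail (-s) (by rwa [neg_sq]) (by linarith [hh n le_rfl]))⟩
  · linear_combination mul_le_mul_of_nonneg_left hω.le hs - t * hsZ
  · linear_combination mul_le_mul_of_nonneg_left hω.le hs - t * hsZ

/-- Let `(r j)_{j ≥ n}` be independent exponential random variables with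
nondecreasing rates `h j > 0` and `∑_{j≥n} 1/h j < ∞`; set `R = ∑_{j≥n} r j` and
`Z = ∑_{j≥n} 1/h(j)²`, and assume `1/√Z ≤ h n / 2`.  Then for every `t > 0`,
`P(R − E[R] > t√Z) ≤ e^{2−t}` and `P(R − E[R] < −t√Z) ≤ e^{2−t}`. -/
theorem exponential_tail_sum_concentration {Ω : Type*} [MeasurableSpace Ω] (P : Measure Ω)
    [IsProbabilityMeasure P] (n : ℕ) (h : ℕ → ℝ) (hh : ∀ j, n ≤ j → 0 < h j)
    (hmono : ∀ j k, n ≤ j → j ≤ k → h j ≤ h k)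
    (hsum : Summable fun j : ℕ => 1 / h (n + j))
    (r : ℕ → Ω → ℝ) (hmeas : ∀ j, Measurable (r j))
    (hindep : iIndepFun
      (fun j : {j : ℕ // n ≤ j} => r j) P)
    (hexp : ∀ j, n ≤ j → IsExponentialRV P (r j) (h j))
    (R : Ω → ℝ) (hR : ∀ ω, R ω = ∑' j : ℕ, r (n + j) ω)
    (Z : ℝ) (hZ : Z = ∑' j : ℕ, 1 / h (n + j) ^ 2)
    (hZh : 1 / Real.sqrt Z ≤ h n / 2) :
    ∀ t : ℝ, 0 < t →
      P {ω | (∫ ω', R ω' ∂P) + t * Real.sqrt Z < R ω} ≤ ENNReal.ofReal (Real.exp (2 - t)) ∧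
      P {ω | R ω < (∫ ω', R ω' ∂P) - t * Real.sqrt Z} ≤ ENNReal.ofReal (Real.exp (2 - t)) :=
  exponential_tail_sum_concentration_general P n h hh hmono hsum r hmeas hindep hexp R hR Z hZ hZh
end

section
/- Let X₁, X₂, … be i.i.d. Bernoulli(μ) random variables with μ ∈ (0,1), let S_k = X₁ + ⋯ + X_k, and for n ≥ 1 let τ_n = inf{k : S_k ≥ n} (which is almost surely finite). Then for every Δ with 0 < Δ < 2μ and μ + Δ/2 ≤ 1, there exists a constant ε > 0, depending only on μ and Δ and not on n, such that for all n ≥ 1: P(n/τ_n > μ + Δ/2) ≤ 2e^{−2εn} and P(n/τ_n < μ − Δ/2) ≤ 2e^{−2εn}. -/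
/-! Hoeffding's inequality controls the partial sums `S k` at deterministic times.
If `n / τ n > c` the walk has already reached `n` at time `⌈n / c⌉₊ - 1`, and if `n / τ n < c`
it has not reached `n` at time `⌊n / c⌋₊`. In both cases `S k` is off from `k μ` by at least
`n |c - μ| / c`, which Hoeffding turns into the bound `exp (-2 (c - μ)² n)`; taking
`c = μ ± Δ / 2` gives `ε = (Δ / 2)²`. Almost sure finiteness of `τ n` follows from the lower
bound at levels `N → ∞`, since a walk that never reaches `n` never reaches any `N ≥ n`. -/

open MeasureTheory ProbabilityTheory Real Finset

section Hoeffding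

variable {Ω : Type*} [MeasurableSpace Ω] {P : Measure Ω} [IsProbabilityMeasure P]
  {X : ℕ → Ω → ℝ} {m : ℝ}

theorem measure_sum_range_ge_le_of_mem_Icc_zero_one (hindep : iIndepFun X P)
    (hmeas : ∀ i, AEMeasurable (X i) P) (hX : ∀ i, ∀ᵐ ω ∂P, X i ω ∈ Set.Icc 0 1)
    (hmean : ∀ i, P[X i] = m) (k : ℕ) {d : ℝ} (hd : 0 ≤ d) :
    P {ω | k * m + d ≤ ∑ i ∈ range k, X i ω} ≤ ENNReal.ofReal (exp (-2 * d ^ 2 / k)) := by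
  have hsubG (i : ℕ) : HasSubgaussianMGF (fun ω => X i ω - m) (1 / 4) P := by
    simpa [hmean i, show (2 : NNReal)⁻¹ ^ 2 = 1 / 4 by norm_num] using
      hasSubgaussianMGF_of_mem_Icc (hmeas i) (hX i)
  have hoeffding := HasSubgaussianMGF.measure_sum_range_ge_le_of_iIndepFun
    (hindep.comp (fun _ x => x - m) fun _ => measurable_id.sub_const m)
    (fun i _ => hsubG i) (n := k) hd
  rw [← ofReal_measureReal]
  convert ENNReal.ofReal_le_ofReal hoeffding using 3
  · ext ω
    simp only [Set.mem_ofPred_eq, Function.comp_apply, sum_sub_distrib, sum_const,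
      card_range, nsmul_eq_mul]
    constructor <;> intro h <;> linarith
  · push_cast
    ring

theorem measure_sum_range_le_le_of_mem_Icc_zero_one (hindep : iIndepFun X P)
    (hmeas : ∀ i, AEMeasurable (X i) P) (hX : ∀ i, ∀ᵐ ω ∂P, X i ω ∈ Set.Icc 0 1)
    (hmean : ∀ i, P[X i] = m) (k : ℕ) {d : ℝ} (hd : 0 ≤ d) :
    P {ω | ∑ i ∈ range k, X i ω ≤ k * m - d} ≤ ENNReal.ofReal (exp (-2 * d ^ 2 / k)) := by
  have hcompl := measure_sum_range_ge_le_of_mem_Icc_zero_one (X := fun i ω => 1 - X i ω)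
    (m := 1 - m)
    (hindep.comp (fun _ x => 1 - x) fun _ => measurable_const.sub measurable_id)
    (fun i => (hmeas i).const_sub 1)
    (fun i => (hX i).mono fun ω hω => ⟨by linarith [hω.2], by linarith [hω.1]⟩)
    (fun i => by
      rw [integral_sub (integrable_const 1) (.of_mem_Icc 0 1 (hmeas i) (hX i)), hmean i]
      simp) k hd
  convert hcompl using 2
  ext ω
  simp only [Set.mem_ofPred_eq, sum_sub_distrib, sum_const, card_range, nsmul_eq_mul,
    mul_one]
  constructor <;> intro h <;> linarith

end Hoeffding

/-- This is `0` when the level `a` is never reached, since `sInf ∅ = 0` in `ℕ`. -/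
noncomputable def hittingIndex (s : ℕ → ℝ) (a : ℝ) : ℕ := sInf {k | a ≤ s k}

section HittingIndex

variable {s : ℕ → ℝ} {a c : ℝ}

theorem le_apply_ceil_div_sub_one_of_lt_div_hittingIndex (hs : Monotone s) (hc : 0 < c)
    (h : c < a / hittingIndex s a) : a ≤ s (⌈a / c⌉₊ - 1) := by
  have hpos : 0 < hittingIndex s a := by
    by_contra! h0
    rw [Nat.le_zero.mp h0, Nat.cast_zero, div_zero] at h
    linarith
  have hreach : a ≤ s (hittingIndex s a) := Nat.sInf_mem (Nat.nonempty_of_pos_sInf hpos)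
  have hlt : (hittingIndex s a : ℝ) < a / c := by
    rw [lt_div_iff₀ hc]
    rw [lt_div_iff₀ (by exact_mod_cast hpos)] at h
    linarith
  have := Nat.lt_ceil.mpr hlt
  exact hreach.trans (hs (by omega))

theorem apply_floor_div_lt_of_div_hittingIndex_lt (hs0 : s 0 < a) (hc : 0 < c)
    (h : a / hittingIndex s a < c) : s ⌊a / c⌋₊ < a := by
  by_contra! hreach
  have hle : hittingIndex s a ≤ ⌊a / c⌋₊ := Nat.sInf_le hreach
  have hpos : 0 < hittingIndex s a := by
    refine Nat.pos_of_ne_zero fun h0 => ?_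
    rcases Nat.sInf_eq_zero.mp h0 with h0 | hempty
    · exact (not_le.mpr hs0) h0
    · exact hempty.subset hreach
  have hfloor : (⌊a / c⌋₊ : ℝ) ≤ a / c :=
    Nat.floor_le (by linarith [Nat.floor_pos.mp (hpos.trans_le hle)])
  rw [div_lt_iff₀ (by exact_mod_cast hpos)] at h
  rw [le_div_iff₀ hc] at hfloor
  have : (hittingIndex s a : ℝ) ≤ ⌊a / c⌋₊ := by exact_mod_cast hle
  nlinarith

end HittingIndex

theorem sum_range_eq_card_filter_eq_one {x : ℕ → ℝ} (hx : ∀ i, x i = 0 ∨ x i = 1) (k : ℕ) :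
    ∑ i ∈ range k, x i = #{i ∈ range k | x i = 1} := by
  rw [← sum_boole]
  refine sum_congr rfl fun i _ => ?_
  rcases hx i with h | h <;> simp [h]

theorem monotone_sum_range_of_nonneg {x : ℕ → ℝ} (hx : ∀ i, 0 ≤ x i) :
    Monotone fun k => ∑ i ∈ range k, x i :=
  (sum_mono_set_of_nonneg hx).comp range_mono

section Arithmetic

variable {k n c μ : ℝ}

theorem sq_sub_mul_le_sq_sub_div (hk : 0 < k) (hkn : c * k ≤ n) (hc1 : c ≤ 1) (hμ : 0 ≤ μ)
    (hμc : μ ≤ c) : (c - μ) ^ 2 * n ≤ (n - k * μ) ^ 2 / k := by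
  rw [le_div_iff₀ hk]
  obtain ⟨e, he, rfl⟩ : ∃ e, 0 ≤ e ∧ n = c * k + e := ⟨n - c * k, by linarith, by ring⟩
  have hsq : (c - μ) ^ 2 ≤ 2 * (c - μ) := by nlinarith
  nlinarith [mul_nonneg (mul_nonneg hk.le hk.le)
      (mul_nonneg (sq_nonneg (c - μ)) (sub_nonneg.mpr hc1)),
    mul_le_mul_of_nonneg_left hsq (mul_nonneg hk.le he)]

theorem sq_sub_mul_le_sq_mul_sub_div (hk : 0 < k) (hkn : c * k ≤ n) (hnk : n < c * (k + 1))
    (hcμ : c ≤ μ) (hμ1 : μ ≤ 1) : (μ - c) ^ 2 * n ≤ (k * μ - (n - 1)) ^ 2 / k := by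
  rw [le_div_iff₀ hk]
  obtain ⟨e, he, rfl⟩ : ∃ e, 0 ≤ e ∧ n = c * k + e := ⟨n - c * k, by linarith, by ring⟩
  have key : (μ - c) * e ≤ 1 - e := by nlinarith
  nlinarith [mul_nonneg (mul_nonneg hk.le (sub_nonneg.mpr hcμ)) (sub_nonneg.mpr key),
    mul_nonneg (mul_nonneg hk.le hk.le)
      (mul_nonneg (sq_nonneg (μ - c)) (by linarith : 0 ≤ 1 - c)),
    mul_nonneg (mul_nonneg hk.le (sub_nonneg.mpr hcμ)) (by linarith : 0 ≤ 1 - e)]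

end Arithmetic

theorem integral_eq_of_eq_zero_or_eq_one {Ω : Type*} [MeasurableSpace Ω] {P : Measure Ω}
    {Y : Ω → ℝ} (hY : Measurable Y) (h01 : ∀ ω, Y ω = 0 ∨ Y ω = 1) {μ : ℝ} (hμ : 0 ≤ μ)
    (hP : P {ω | Y ω = 1} = ENNReal.ofReal μ) : P[Y] = μ := by
  have hind : Y = Set.indicator {ω | Y ω = 1} 1 := by
    funext ω
    rcases h01 ω with h | h <;> simp [h]
  have hset : MeasurableSet {ω | Y ω = 1} := hY (measurableSet_singleton 1)
  rw [hind, integral_indicator_one hset, measureReal_def, hP,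
    ENNReal.toReal_ofReal hμ]

section HittingRatio

variable {Ω : Type*} [MeasurableSpace Ω] {P : Measure Ω} [IsProbabilityMeasure P]
  {X : ℕ → Ω → ℝ} {μ c : ℝ} {n : ℕ}

theorem measure_lt_div_hittingIndex_le (hindep : iIndepFun X P) (hmeas : ∀ i, Measurable (X i))
    (h01 : ∀ i ω, X i ω = 0 ∨ X i ω = 1) (hmean : ∀ i, P[X i] = μ) (hμ : 0 ≤ μ) (hμc : μ ≤ c)
    (hc : 0 < c) (hc1 : c ≤ 1) (hn : 1 ≤ n) :
    P {ω | c < n / hittingIndex (fun k => ∑ i ∈ range k, X i ω) n}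
      ≤ ENNReal.ofReal (exp (-2 * (c - μ) ^ 2 * n)) := by
  have hn' : (1 : ℝ) ≤ n := by exact_mod_cast hn
  set k := ⌈(n : ℝ) / c⌉₊ - 1
  have hsub : {ω | c < n / hittingIndex (fun k => ∑ i ∈ range k, X i ω) n}
      ⊆ {ω | k * μ + (n - k * μ) ≤ ∑ i ∈ range k, X i ω} := fun ω hω => by
    simpa using le_apply_ceil_div_sub_one_of_lt_div_hittingIndex
      (monotone_sum_range_of_nonneg fun i => by rcases h01 i ω with h | h <;> simp [h]) hc hω
  have hkn : c * k ≤ n := by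
    have := Nat.ceil_lt_add_one (div_nonneg (by positivity) hc.le : (0 : ℝ) ≤ n / c)
    have hk : (k : ℝ) ≤ n / c := by
      rw [Nat.cast_sub (Nat.one_le_ceil_iff.mpr (by positivity)), Nat.cast_one]
      linarith
    rwa [le_div_iff₀' hc] at hk
  rcases Nat.eq_zero_or_pos k with hk | hk
  · refine (measure_mono hsub).trans (le_of_eq_of_le ?_ zero_le)
    simp [hk, hn'.trans_lt' one_pos |>.not_ge]
  refine (measure_mono hsub).trans ((measure_sum_range_ge_le_of_mem_Icc_zero_one hindep
    (fun i => (hmeas i).aemeasurable) (fun i => ae_of_all _ fun ω => ?_) hmean k ?_).trans ?_)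
  · rcases h01 i ω with h | h <;> simp [h]
  · nlinarith
  · refine ENNReal.ofReal_le_ofReal (exp_le_exp.mpr ?_)
    have := sq_sub_mul_le_sq_sub_div (by exact_mod_cast hk) hkn hc1 hμ hμc
    rw [mul_div_assoc]
    nlinarith

theorem measure_div_hittingIndex_lt_le (hindep : iIndepFun X P) (hmeas : ∀ i, Measurable (X i))
    (h01 : ∀ i ω, X i ω = 0 ∨ X i ω = 1) (hmean : ∀ i, P[X i] = μ) (hc : 0 < c) (hcμ : c ≤ μ)
    (hμ1 : μ ≤ 1) (hn : 1 ≤ n) :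
    P {ω | n / hittingIndex (fun k => ∑ i ∈ range k, X i ω) n < c}
      ≤ ENNReal.ofReal (exp (-2 * (μ - c) ^ 2 * n)) := by
  have hn' : (1 : ℝ) ≤ n := by exact_mod_cast hn
  set k := ⌊(n : ℝ) / c⌋₊
  have hsub : {ω | n / hittingIndex (fun k => ∑ i ∈ range k, X i ω) n < c}
      ⊆ {ω | ∑ i ∈ range k, X i ω ≤ k * μ - (k * μ - (n - 1))} := fun ω hω => by
    have hlt := apply_floor_div_lt_of_div_hittingIndex_lt (by rw [sum_range_zero]; linarith) hc hω
    -- the partial sums are integers, so missing `n` means missing it by `1`: this absorbs the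
    -- rounding in `⌊n / c⌋₊`
    rw [sum_range_eq_card_filter_eq_one (h01 · ω)] at hlt
    have hcard : (#{i ∈ range k | X i ω = 1} : ℝ) + 1 ≤ n := by exact_mod_cast hlt
    rw [Set.mem_ofPred_eq, sub_sub_cancel, sum_range_eq_card_filter_eq_one (h01 · ω)]
    linarith
  have hk : 0 < k := Nat.floor_pos.mpr ((one_le_div hc).mpr (by linarith))
  have hkn : c * k ≤ n := (le_div_iff₀' hc).mp (Nat.floor_le (by positivity))
  have hnk : n < c * (k + 1) := (div_lt_iff₀' hc).mp (Nat.lt_floor_add_one _)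
  refine (measure_mono hsub).trans ((measure_sum_range_le_le_of_mem_Icc_zero_one hindep
    (fun i => (hmeas i).aemeasurable) (fun i => ae_of_all _ fun ω => ?_) hmean k ?_).trans ?_)
  · rcases h01 i ω with h | h <;> simp [h]
  · nlinarith
  · refine ENNReal.ofReal_le_ofReal (exp_le_exp.mpr ?_)
    have := sq_sub_mul_le_sq_mul_sub_div (by exact_mod_cast hk) hkn hnk hcμ hμ1
    rw [mul_div_assoc]
    nlinarith

theorem measure_exists_le_sum_range_eq_one (hindep : iIndepFun X P)
    (hmeas : ∀ i, Measurable (X i)) (h01 : ∀ i ω, X i ω = 0 ∨ X i ω = 1)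
    (hmean : ∀ i, P[X i] = μ) (hμ0 : 0 < μ) (hμ1 : μ ≤ 1) (n : ℕ) :
    P {ω | ∃ k, (n : ℝ) ≤ ∑ i ∈ range k, X i ω} = 1 := by
  have hset : MeasurableSet {ω | ∃ k, (n : ℝ) ≤ ∑ i ∈ range k, X i ω} := by
    simp only [Set.ofPred_exists]
    exact .iUnion fun k => measurableSet_le measurable_const (measurable_sum _ fun i _ => hmeas i)
  rw [← prob_compl_eq_zero_iff hset]
  have hsub (N : ℕ) (hN : n ≤ N) : {ω | ∃ k, (n : ℝ) ≤ ∑ i ∈ range k, X i ω}ᶜ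
      ⊆ {ω | N / hittingIndex (fun k => ∑ i ∈ range k, X i ω) N < μ / 2} := fun ω hω => by
    have hempty : {k | (N : ℝ) ≤ ∑ i ∈ range k, X i ω} = ∅ :=
      Set.eq_empty_of_forall_notMem fun k hk =>
        hω ⟨k, le_trans (by exact_mod_cast hN) hk⟩
    simp only [Set.mem_ofPred_eq, hittingIndex, hempty, Nat.sInf_empty, Nat.cast_zero, div_zero]
    positivity
  have hbound : ∀ᶠ N : ℕ in Filter.atTop, P {ω | ∃ k, (n : ℝ) ≤ ∑ i ∈ range k, X i ω}ᶜ
      ≤ ENNReal.ofReal (exp (-2 * (μ - μ / 2) ^ 2 * N)) :=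
    Filter.eventually_atTop.mpr ⟨max n 1, fun N hN =>
      (measure_mono (hsub N (le_of_max_le_left hN))).trans
        (measure_div_hittingIndex_lt_le hindep hmeas h01 hmean (half_pos hμ0) (half_le_self hμ0.le)
          hμ1 (le_of_max_le_right hN))⟩
  have hlim : Filter.Tendsto (fun N : ℕ => ENNReal.ofReal (exp (-2 * (μ - μ / 2) ^ 2 * N)))
      Filter.atTop (nhds 0) := by
    rw [← ENNReal.ofReal_zero]
    refine ENNReal.tendsto_ofReal ((tendsto_exp_neg_atTop_nhds_zero.comp
      (tendsto_natCast_atTop_atTop.const_mul_atTop (by nlinarith : 0 < 2 * (μ - μ / 2) ^ 2))).congr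
      fun N => ?_)
    simp only [Function.comp_apply, neg_mul]
  exact nonpos_iff_eq_zero.mp (ge_of_tendsto hlim hbound)

end HittingRatio

/-- Let `X 0, X 1, …` be i.i.d. Bernoulli(μ) random variables,
`S k = X 0 + ⋯ + X (k-1)` (the sum of the first `k` of them), and
`τ n = inf {k : S k ≥ n}` (a.s. finite).  For every gap `Δ` with `0 < Δ < 2μ` and
`μ + Δ/2 ≤ 1`, there is `ε > 0`, independent of `n`, with
`P(n/τ_n > μ + Δ/2) ≤ 2e^{−2εn}` and `P(n/τ_n < μ − Δ/2) ≤ 2e^{−2εn}` for all `n ≥ 1`. -/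
theorem bernoulli_hitting_time_concentration {Ω : Type*} [MeasurableSpace Ω]
    (P : Measure Ω) [IsProbabilityMeasure P] (μ : ℝ) (hμ : μ ∈ Set.Ioo (0 : ℝ) 1)
    (X : ℕ → Ω → ℝ) (hmeas : ∀ k, Measurable (X k))
    (h01 : ∀ k ω, X k ω = 0 ∨ X k ω = 1)
    (hber : ∀ k, P {ω | X k ω = 1} = ENNReal.ofReal μ)
    (hindep : iIndepFun X P)
    (S : ℕ → Ω → ℝ) (hS : ∀ k ω, S k ω = ∑ i ∈ Finset.range k, X i ω)
    (τ : ℕ → Ω → ℕ) (hτ : ∀ n ω, τ n ω = sInf {k : ℕ | (n : ℝ) ≤ S k ω}) :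
    (∀ n : ℕ, P {ω | ∃ k, (n : ℝ) ≤ S k ω} = 1) ∧
      ∀ Δ : ℝ, 0 < Δ → Δ < 2 * μ → μ + Δ / 2 ≤ 1 →
        ∃ ε > (0 : ℝ), ∀ n : ℕ, 1 ≤ n →
          P {ω | μ + Δ / 2 < (n : ℝ) / (τ n ω : ℝ)} ≤
              ENNReal.ofReal (2 * Real.exp (-2 * ε * n)) ∧
            P {ω | (n : ℝ) / (τ n ω : ℝ) < μ - Δ / 2} ≤
              ENNReal.ofReal (2 * Real.exp (-2 * ε * n)) := by
  obtain ⟨hμ0, hμ1⟩ := hμ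
  obtain rfl : S = fun k ω => ∑ i ∈ range k, X i ω := funext₂ hS
  obtain rfl : τ = fun (n : ℕ) ω => hittingIndex (fun k => ∑ i ∈ range k, X i ω) n := funext₂ hτ
  have hmean (i : ℕ) : P[X i] = μ :=
    integral_eq_of_eq_zero_or_eq_one (hmeas i) (h01 i) hμ0.le (hber i)
  have hdouble (x : ℝ) : ENNReal.ofReal (exp x) ≤ ENNReal.ofReal (2 * exp x) :=
    ENNReal.ofReal_le_ofReal (by linarith [exp_pos x])
  refine ⟨measure_exists_le_sum_range_eq_one hindep hmeas h01 hmean hμ0 hμ1.le,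
    fun Δ hΔ hΔμ hle => ⟨(Δ / 2) ^ 2, by positivity, fun n hn => ⟨?_, ?_⟩⟩⟩
  · refine (measure_lt_div_hittingIndex_le hindep hmeas h01 hmean hμ0.le (by linarith)
      (by linarith) hle hn).trans ?_
    rw [add_sub_cancel_left]
    exact hdouble _
  · refine (measure_div_hittingIndex_lt_le hindep hmeas h01 hmean (by linarith) (by linarith)
      hμ1.le hn).trans ?_
    rw [sub_sub_cancel]
    exact hdouble _
end
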